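/- Let d and m be positive integers, let P be the rational Dyck positroid induced by a d×m rational Dyck matrix D, and let (I_1,…,I_{d+m}) be the Grassmann necklace of P, with indices taken modulo d+m (so I_{d+m+1} = I_1). Then for every i ∈ {1,…,d+m}, one has i ∈ I_i and I_{i+1} = (I_i \ {i}) ∪ {j} for some j ≠ i; in particular, I_{i+1} ≠ I_i for every i, so the decorated permutation of P has no fixed points. -/

import Mathlib

/-- `D` is a `d × m` rational Dyck matrix: its zero entries (anchored in the
upper-right corner) are cut out by a (vertically reflected) rational Dyck path
of type `(m,d)`; `z j` is the number of north steps preceding the `(j+1)`-st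
east step. -/
def IsRDM (d m : ℕ) (D : Matrix (Fin d) (Fin m) ℝ) : Prop :=
  ∃ z : Fin m → ℕ, Monotone z ∧ (∀ j, z j ≤ d) ∧
    (∀ j : Fin m, m * z j ≤ d * (j : ℕ)) ∧
    (∀ i j, D i j = if (i : ℕ) + 1 ≤ z j then 0 else 1)

/-- The map `φ_{d,m}`: the first `d` columns form the identity matrix and the
entry in row `i`, column `d + j` is `(-1)^(d-i) * D (d+1-i) j` (1-indexed). -/
def phiMat {d m : ℕ} (D : Matrix (Fin d) (Fin m) ℝ) :
    Matrix (Fin d) (Fin (d + m)) ℝ := fun i c =>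
  if _ : (c : ℕ) < d then (if (c : ℕ) = (i : ℕ) then (1 : ℝ) else 0)
  else (-1 : ℝ) ^ (d - 1 - (i : ℕ)) *
    D ⟨d - 1 - (i : ℕ), by have := i.isLt; omega⟩
      ⟨(c : ℕ) - d, by have := c.isLt; omega⟩

/-- `B` is a basis of the matroid represented by the `d × n` matrix `A`. -/
def IsBasisOf {d n : ℕ} (A : Matrix (Fin d) (Fin n) ℝ) (B : Finset (Fin n)) : Prop :=
  B.card = d ∧ LinearIndependent ℝ (fun b : B => (A.transpose b.1))

open Classical in
/-- The weight `ω_A j`: the largest (1-indexed) row index with nonzero entry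
in column `j` (and `0` if the column is zero). -/
noncomputable def wt {d n : ℕ} (A : Matrix (Fin d) (Fin n) ℝ) (j : Fin n) : ℕ :=
  (Finset.univ.filter fun i : Fin d => A i j ≠ 0).sup fun i => (i : ℕ) + 1

/-- `c` is a principal index of `A`: (1-indexed) `d < c+1 ≤ d+m` and the
column `c` differs from the previous column. -/
def IsPrincipal {d m : ℕ} (A : Matrix (Fin d) (Fin (d + m)) ℝ) (c : Fin (d + m)) : Prop :=
  d ≤ (c : ℕ) ∧ ∃ i : Fin d, A i c ≠ A i ⟨(c : ℕ) - 1, by have := c.isLt; omega⟩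

/-- Position of `x` in the cyclically shifted order `≤_b`. -/
def shiftVal {n : ℕ} (b x : Fin n) : ℕ := ((x - b : Fin n) : ℕ)

/-- The list of positions (w.r.t. `≤_b`) of the elements of `B`, sorted increasingly. -/
def shiftedSorted {n : ℕ} (b : Fin n) (B : Finset (Fin n)) : List ℕ :=
  (B.val.map (shiftVal b)).sort (· ≤ ·)

/-- Lexicographic comparison of lists of naturals. -/
def lexLE (l₁ l₂ : List ℕ) : Prop := l₁ = l₂ ∨ List.Lex (· < ·) l₁ l₂

/-- `I` is the entry at base point `b` of the Grassmann necklace of the matroid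
represented by `A`: it is the lexicographically `≤_b`-minimal basis. -/
def IsGNEntry {d n : ℕ} (A : Matrix (Fin d) (Fin n) ℝ) (b : Fin n) (I : Finset (Fin n)) : Prop :=
  IsBasisOf A I ∧ ∀ B, IsBasisOf A B → lexLE (shiftedSorted b I) (shiftedSorted b B)

/-- Cyclic successor on `Fin n`. -/
def finSucc {n : ℕ} (b : Fin n) : Fin n :=
  ⟨((b : ℕ) + 1) % n, Nat.mod_lt _ (by have := b.isLt; omega)⟩

/-!
The `≤_b`-lexicographically minimal basis of a full-rank matrix is the greedy one: `y ∈ I_b` iff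
the column `y` is not in the span of the columns strictly before `y` in `≤_b`. Passing from `≤_b`
to `≤_{b+1}` only moves `b` from the first to the last place, so for `y ≠ b` the set of earlier
columns shrinks and `I_b \ {b} ⊆ I_{b+1}`. For a rational Dyck matrix, every column of `φ(D)` is
nonzero (so `b ∈ I_b`) and the columns other than `b` span `ℝ^d` (so `b ∉ I_{b+1}`); counting gives
`I_{b+1} = (I_b \ {b}) ∪ {j}`.
-/

open Submodule

theorem List.lt_of_pairwise_lt_of_mem_of_notMem {α : Type*} [LinearOrder α] :
    ∀ {l₁ l₂ : List α}, l₁.Pairwise (· < ·) → l₂.Pairwise (· < ·) → l₁.length ≤ l₂.length →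
      ∀ {y : α}, y ∈ l₁ → y ∉ l₂ → (∀ x ∈ l₂, x < y → x ∈ l₁) → l₁ < l₂
  | [], _, _, _, _, _, hy₁, _, _ => absurd hy₁ List.not_mem_nil
  | _ :: _, [], _, _, hlen, _, _, _, _ => absurd hlen (by simp)
  | a :: r₁, c :: r₂, h₁, h₂, hlen, y, hy₁, hy₂, hsub => by
    rw [List.pairwise_cons] at h₁ h₂
    rcases lt_trichotomy a c with hac | rfl | hca
    · exact List.Lex.rel hac
    · have hya : y ≠ a := fun h => hy₂ (h ▸ List.mem_cons_self)
      refine List.Lex.cons (List.lt_of_pairwise_lt_of_mem_of_notMem h₁.2 h₂.2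
        (by simpa using hlen) ((List.mem_cons.1 hy₁).resolve_left hya)
        (fun h => hy₂ (List.mem_cons_of_mem _ h)) fun x hx hxy => ?_)
      exact (List.mem_cons.1 (hsub x (List.mem_cons_of_mem _ hx) hxy)).resolve_left
        (h₂.1 x hx).ne'
    · exfalso
      have hay : a ≤ y := by
        rcases List.mem_cons.1 hy₁ with rfl | hy
        · exact le_rfl
        · exact (h₁.1 y hy).le
      rcases List.mem_cons.1 (hsub c List.mem_cons_self (hca.trans_le hay)) with rfl | hc
      · exact lt_irrefl _ hca
      · exact lt_asymm hca (h₁.1 c hc)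

section CyclicOrder

variable {n : ℕ}

theorem shiftVal_eq (b x : Fin n) :
    shiftVal b x = if (b : ℕ) ≤ x then (x : ℕ) - b else n + x - b := by
  have := b.isLt
  simp only [shiftVal, Fin.sub_def]
  split_ifs with h
  · rw [show n - b + x = n + (x - b) by omega, Nat.add_mod_left, Nat.mod_eq_of_lt (by omega)]
  · rw [Nat.mod_eq_of_lt (by omega)]; omega

theorem finSucc_val (b : Fin n) :
    (finSucc b : ℕ) = if (b : ℕ) + 1 = n then 0 else (b : ℕ) + 1 := by
  have := b.isLt
  simp only [finSucc]
  split_ifs with h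
  · rw [h, Nat.mod_self]
  · exact Nat.mod_eq_of_lt (by omega)

theorem shiftVal_finSucc_self (b : Fin n) : shiftVal (finSucc b) b = n - 1 := by
  have := b.isLt
  rw [shiftVal_eq, finSucc_val]
  split_ifs <;> omega

theorem shiftVal_eq_shiftVal_finSucc_add_one {b x : Fin n} (hx : x ≠ b) :
    shiftVal b x = shiftVal (finSucc b) x + 1 := by
  have := b.isLt
  have := x.isLt
  have : (x : ℕ) ≠ b := Fin.val_ne_of_ne hx
  rw [shiftVal_eq, shiftVal_eq, finSucc_val]
  split_ifs <;> omega

def cycIio (b y : Fin n) : Set (Fin n) := {x | shiftVal b x < shiftVal b y}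

theorem cycIio_subset_cycIio {b x y : Fin n} (h : x ∈ cycIio b y) : cycIio b x ⊆ cycIio b y :=
  fun t (ht : shiftVal b t < shiftVal b x) => lt_trans ht h

theorem cycIio_self (b : Fin n) : cycIio b b = ∅ := by
  ext x
  simp [cycIio, shiftVal_eq]

theorem cycIio_finSucc_self (b : Fin n) : cycIio (finSucc b) b = {b}ᶜ := by
  ext x
  simp only [cycIio, shiftVal_finSucc_self, Set.mem_ofPred_eq, Set.mem_compl_singleton_iff]
  constructor
  · rintro hx rfl
    exact lt_irrefl _ (shiftVal_finSucc_self x ▸ hx)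
  · intro hx
    have := shiftVal_eq_shiftVal_finSucc_add_one hx
    have : shiftVal b x < n := (x - b).isLt
    omega

theorem cycIio_finSucc_subset {b y : Fin n} (hy : y ≠ b) :
    cycIio (finSucc b) y ⊆ cycIio b y := by
  intro x hx
  have hxb : x ≠ b := by
    rintro rfl
    have hyx : y ∈ cycIio (finSucc x) x := by rw [cycIio_finSucc_self]; exact hy
    exact lt_asymm (show shiftVal (finSucc x) x < shiftVal (finSucc x) y from hx) hyx
  simp only [cycIio, Set.mem_ofPred_eq] at hx ⊢
  rw [shiftVal_eq_shiftVal_finSucc_add_one hxb, shiftVal_eq_shiftVal_finSucc_add_one hy]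
  omega

theorem shiftVal_injective [NeZero n] (b : Fin n) : Function.Injective (shiftVal b) :=
  fun _ _ h => sub_left_injective (Fin.ext h)

end CyclicOrder

theorem not_lt_of_lexLE {l₁ l₂ : List ℕ} (h : lexLE l₁ l₂) : ¬ l₂ < l₁ := by
  rcases h with rfl | h
  · exact List.lt_irrefl l₁
  · exact List.lt_asymm h

section ShiftedSorted

variable {n : ℕ} (b : Fin n)

theorem mem_shiftedSorted {B : Finset (Fin n)} {k : ℕ} :
    k ∈ shiftedSorted b B ↔ ∃ x ∈ B, shiftVal b x = k := by
  simp [shiftedSorted]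

theorem length_shiftedSorted (B : Finset (Fin n)) : (shiftedSorted b B).length = B.card := by
  simp [shiftedSorted]

theorem pairwise_lt_shiftedSorted [NeZero n] (B : Finset (Fin n)) :
    (shiftedSorted b B).Pairwise (· < ·) := by
  have hnodup : (shiftedSorted b B).Nodup := by
    rw [← Multiset.coe_nodup, shiftedSorted, Multiset.sort_eq]
    exact B.nodup.map (shiftVal_injective b)
  exact ((Multiset.pairwise_sort _ _).and hnodup).imp fun h => lt_of_le_of_ne h.1 h.2

theorem shiftedSorted_lt_of_mem_of_notMem [NeZero n] {J K : Finset (Fin n)}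
    (hcard : K.card ≤ J.card) {y : Fin n} (hyK : y ∈ K) (hyJ : y ∉ J)
    (hsub : ∀ x ∈ J, x ∈ cycIio b y → x ∈ K) :
    shiftedSorted b K < shiftedSorted b J := by
  refine List.lt_of_pairwise_lt_of_mem_of_notMem (pairwise_lt_shiftedSorted b K)
    (pairwise_lt_shiftedSorted b J) (by simpa [length_shiftedSorted] using hcard)
    ((mem_shiftedSorted b).2 ⟨y, hyK, rfl⟩) ?_ ?_
  · rintro hy
    obtain ⟨x, hx, hxy⟩ := (mem_shiftedSorted b).1 hy
    exact hyJ (shiftVal_injective b hxy ▸ hx)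
  · intro k hk hky
    obtain ⟨x, hx, rfl⟩ := (mem_shiftedSorted b).1 hk
    exact (mem_shiftedSorted b).2 ⟨x, hsub x hx hky, rfl⟩

end ShiftedSorted

section LexMinimalBasis

variable {d n : ℕ} {A : Matrix (Fin d) (Fin n) ℝ}

theorem isBasisOf_iff {B : Finset (Fin n)} :
    IsBasisOf A B ↔ B.card = d ∧ LinearIndepOn ℝ A.col (B : Set (Fin n)) := Iff.rfl

theorem IsBasisOf.linearIndepOn {B : Finset (Fin n)} (hB : IsBasisOf A B) :
    LinearIndepOn ℝ A.col (B : Set (Fin n)) := hB.2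

theorem span_col_image_eq_top_iff {B : Set (Fin n)} [Fintype B] (hB : LinearIndepOn ℝ A.col B) :
    span ℝ (A.col '' B) = ⊤ ↔ Fintype.card B = d := by
  have hrank : Module.finrank ℝ (span ℝ (A.col '' B)) = Fintype.card B :=
    Set.image_eq_range _ _ ▸ finrank_span_eq_card hB
  constructor
  · intro h
    rw [← hrank, h, finrank_top, Module.finrank_fin_fun]
  · intro h
    exact Submodule.eq_top_of_finrank_eq (by rw [hrank, h, Module.finrank_fin_fun])

theorem IsBasisOf.span_eq_top {B : Finset (Fin n)} (hB : IsBasisOf A B) :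
    span ℝ (A.col '' B) = ⊤ :=
  (span_col_image_eq_top_iff hB.linearIndepOn).2 (by simpa using hB.1)

theorem IsBasisOf.exists_isBasisOf_superset {J : Finset (Fin n)} (hJ : IsBasisOf A J)
    {S : Set (Fin n)} (hS : LinearIndepOn ℝ A.col S) :
    ∃ K : Finset (Fin n), S ⊆ K ∧ IsBasisOf A K := by
  classical
  obtain ⟨K, -, hSK, hspan, hK⟩ := exists_linearIndepOn_extension hS (Set.subset_univ S)
  have hKtop : span ℝ (A.col '' K) = ⊤ := by
    rw [eq_top_iff, ← hJ.span_eq_top, span_le]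
    exact (Set.image_mono (Set.subset_univ _)).trans hspan
  refine ⟨K.toFinset, by simpa using hSK, isBasisOf_iff.2 ⟨?_, by simpa using hK⟩⟩
  simpa using (span_col_image_eq_top_iff hK).1 hKtop

variable [NeZero n] {b : Fin n} {J : Finset (Fin n)}

theorem IsGNEntry.col_mem_span_of_notMem (hJ : IsGNEntry A b J) {y : Fin n} (hy : y ∉ J) :
    A.col y ∈ span ℝ (A.col '' (J ∩ cycIio b y)) := by
  -- otherwise `J ∩ cycIio b y` plus `y` extends to a basis lexicographically smaller than `J`
  by_contra h
  have hind : LinearIndepOn ℝ A.col (insert y (J ∩ cycIio b y)) :=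
    (hJ.1.linearIndepOn.mono Set.inter_subset_left).insert h
  obtain ⟨K, hyK, hK⟩ := hJ.1.exists_isBasisOf_superset hind
  refine not_lt_of_lexLE (hJ.2 K hK) (shiftedSorted_lt_of_mem_of_notMem b
    (hK.1.trans hJ.1.1.symm).le (hyK (Set.mem_insert y _)) hy
    fun x hx hxy => hyK (Set.mem_insert_of_mem y ⟨hx, hxy⟩))

theorem IsGNEntry.mem_iff (hJ : IsGNEntry A b J) {y : Fin n} :
    y ∈ J ↔ A.col y ∉ span ℝ (A.col '' cycIio b y) := by
  have hind : LinearIndepOn ℝ A.col (J ∩ cycIio b y) :=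
    hJ.1.linearIndepOn.mono Set.inter_subset_left
  constructor
  · intro hy hspan
    have hle : span ℝ (A.col '' cycIio b y) ≤ span ℝ (A.col '' (J ∩ cycIio b y)) := by
      rw [span_le]
      rintro _ ⟨x, hxy, rfl⟩
      by_cases hx : x ∈ J
      · exact subset_span ⟨x, ⟨hx, hxy⟩, rfl⟩
      · exact span_mono (Set.image_mono (Set.inter_subset_inter_right _
          (cycIio_subset_cycIio hxy))) (hJ.col_mem_span_of_notMem hx)
    have hins : LinearIndepOn ℝ A.col (insert y (J ∩ cycIio b y)) :=
      hJ.1.linearIndepOn.mono (Set.insert_subset hy Set.inter_subset_left)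
    exact hind.notMem_span_iff.2 ⟨hins, fun h => lt_irrefl (shiftVal b y) h.2⟩ (hle hspan)
  · intro h
    by_contra hy
    exact h (span_mono (Set.image_mono Set.inter_subset_right) (hJ.col_mem_span_of_notMem hy))

end LexMinimalBasis

theorem Submodule.eq_top_of_single_mem_of_apply_ne_zero {K ι : Type*} [Field K] [Fintype ι]
    [DecidableEq ι] (S : Submodule K (ι → K)) {r : ι}
    (hsingle : ∀ i ≠ r, Pi.single i 1 ∈ S)
    {w : ι → K} (hw : w ∈ S) (hwr : w r ≠ 0) : S = ⊤ := by
  have hsingle' : ∀ i ≠ r, Pi.single i (w i) ∈ S := fun i hi => by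
    have := S.smul_mem (w i) (hsingle i hi)
    rwa [← Pi.single_smul', smul_eq_mul, mul_one] at this
  have hr : Pi.single r (w r) ∈ S := by
    have hsum : w - ∑ i ∈ Finset.univ.erase r, Pi.single i (w i) = Pi.single r (w r) := by
      rw [sub_eq_iff_eq_add', Finset.sum_erase_add _ _ (Finset.mem_univ r), Finset.univ_sum_single]
    exact hsum ▸ S.sub_mem hw (S.sum_mem fun i hi => hsingle' i (Finset.ne_of_mem_erase hi))
  have hall : ∀ i, Pi.single i 1 ∈ S := fun i => by
    by_cases hi : i = r
    · have := S.smul_mem (w r)⁻¹ hr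
      rwa [← Pi.single_smul', smul_eq_mul, inv_mul_cancel₀ hwr, ← hi] at this
    · exact hsingle i hi
  rw [eq_top_iff, ← (Pi.basisFun K ι).span_eq, span_le]
  rintro _ ⟨i, rfl⟩
  simpa using hall i

theorem Fin.castAdd_ne_natAdd {m n : ℕ} (i : Fin m) (j : Fin n) :
    Fin.castAdd n i ≠ Fin.natAdd m j :=
  Fin.ne_of_val_ne (by simp only [Fin.val_castAdd, Fin.val_natAdd]; omega)

section DyckMatrix

variable {d m : ℕ} {D : Matrix (Fin d) (Fin m) ℝ}

theorem phiMat_col_castAdd (c : Fin d) :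
    (phiMat D).col (Fin.castAdd m c) = Pi.single c 1 := by
  ext i
  simp [phiMat, Pi.single_apply, Fin.ext_iff, eq_comm]

theorem phiMat_natAdd (i : Fin d) (j : Fin m) :
    phiMat D i (Fin.natAdd d j) = (-1) ^ (d - 1 - (i : ℕ)) * D i.rev j := by
  simp [phiMat, Fin.rev, Nat.sub_sub, Nat.add_comm]

theorem IsRDM.apply_ne_zero (hD : IsRDM d m D) {i : Fin d} {j : Fin m}
    (h : d * j < m * (i + 1)) : D i j ≠ 0 := by
  obtain ⟨z, -, -, hz, hDz⟩ := hD
  have : z j < i + 1 := lt_of_mul_lt_mul_left ((hz j).trans_lt h) (Nat.zero_le m)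
  simp [hDz, this.not_ge]

theorem IsRDM.phiMat_natAdd_ne_zero (hD : IsRDM d m D) {i : Fin d} {j : Fin m}
    (h : d * j < m * (d - i)) : phiMat D i (Fin.natAdd d j) ≠ 0 := by
  rw [phiMat_natAdd]
  refine mul_ne_zero (pow_ne_zero _ (by norm_num)) (hD.apply_ne_zero ?_)
  rwa [Fin.val_rev, show d - (i + 1) + 1 = d - i by omega]

theorem IsRDM.phiMat_col_ne_zero (hd : 0 < d) (hD : IsRDM d m D) (c : Fin (d + m)) :
    (phiMat D).col c ≠ 0 := by
  induction c using Fin.addCases with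
  | left c => simp [phiMat_col_castAdd]
  | right j =>
    intro h
    refine hD.phiMat_natAdd_ne_zero (i := ⟨0, hd⟩) ?_ (congrFun h ⟨0, hd⟩)
    simpa [Nat.mul_comm d] using Nat.mul_lt_mul_of_pos_right j.isLt hd

theorem IsRDM.span_phiMat_col_compl_eq_top (hd : 0 < d) (hm : 0 < m) (hD : IsRDM d m D)
    (b : Fin (d + m)) : span ℝ ((phiMat D).col '' {b}ᶜ) = ⊤ := by
  have hsingle (c : Fin d) (hc : Fin.castAdd m c ≠ b) :
      Pi.single c 1 ∈ span ℝ ((phiMat D).col '' {b}ᶜ) :=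
    phiMat_col_castAdd (D := D) c ▸ subset_span ⟨_, hc, rfl⟩
  induction b using Fin.addCases with
  | left b =>
    refine eq_top_of_single_mem_of_apply_ne_zero _ (r := b)
      (fun c hc => hsingle c fun h => hc (Fin.castAdd_injective _ _ h))
      (subset_span ⟨Fin.natAdd d ⟨0, hm⟩, ?_, rfl⟩) (hD.phiMat_natAdd_ne_zero ?_)
    · exact (Fin.castAdd_ne_natAdd b _).symm
    · simpa using Nat.mul_pos hm (Nat.sub_pos_of_lt b.isLt)
  | right j =>
    exact eq_top_of_single_mem_of_apply_ne_zero _ (r := ⟨0, hd⟩)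
      (fun c _ => hsingle c (Fin.castAdd_ne_natAdd c j))
      (hsingle ⟨0, hd⟩ (Fin.castAdd_ne_natAdd _ j)) (by simp)

end DyckMatrix

/-- For the Grassmann necklace `(I_1, …, I_{d+m})` of a rational Dyck positroid
(here `I b` is the `≤_b`-lexicographically minimal basis, 0-indexed), every
entry contains its base point, consecutive entries satisfy
`I_{i+1} = (I_i \ {i}) ∪ {j}` for some `j ≠ i`, and in particular consecutive
entries are distinct (so the decorated permutation has no fixed points). -/
theorem grassmannNecklace_of_RDP_no_fixed_points (d m : ℕ) (hd : 0 < d) (hm : 0 < m)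
    (D : Matrix (Fin d) (Fin m) ℝ) (hD : IsRDM d m D)
    (I : Fin (d + m) → Finset (Fin (d + m)))
    (hI : ∀ b, IsGNEntry (phiMat D) b (I b)) :
    ∀ b : Fin (d + m), b ∈ I b ∧
      (∃ j : Fin (d + m), j ≠ b ∧ I (finSucc b) = insert j ((I b).erase b)) ∧
      I (finSucc b) ≠ I b := by
  have : NeZero (d + m) := ⟨by omega⟩
  intro b
  have hbI : b ∈ I b := by
    rw [(hI b).mem_iff, cycIio_self, Set.image_empty, span_empty, mem_bot]
    exact hD.phiMat_col_ne_zero hd b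
  have hbJ : b ∉ I (finSucc b) := by
    rw [(hI _).mem_iff, cycIio_finSucc_self, hD.span_phiMat_col_compl_eq_top hd hm b, not_not]
    exact mem_top
  have hsub : (I b).erase b ⊆ I (finSucc b) := fun x hx => by
    obtain ⟨hxb, hx⟩ := Finset.mem_erase.1 hx
    rw [(hI _).mem_iff] at hx ⊢
    exact fun h => hx (span_mono (Set.image_mono (cycIio_finSucc_subset hxb)) h)
  obtain ⟨j, -, hJ⟩ := Finset.exists_eq_insert_iff.2 ⟨hsub, by
    rw [Finset.card_erase_of_mem hbI, (hI b).1.1, (hI _).1.1]; omega⟩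
  refine ⟨hbI, ⟨j, ?_, hJ.symm⟩, fun h => hbJ (h ▸ hbI)⟩
  rintro rfl
  exact hbJ (hJ ▸ Finset.mem_insert_self _ _)
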